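/- For the asymmetric length-function distance, Env(A,B) = Env^out(A, S) ∩ Env^in(B, S) for every nonempty S ⊆ W(A,B), where Env(A,B) := {C | d(A,B) = d(A,C) + d(C,B)}, Env^out(A,S) := {C | S ⊆ W(A,C)}, and Env^in(B,S) := {C | S ⊆ W(C,B)}. -/

import Mathlib

/-!
If `γ` realises `Λ(A,B)`, then for any `C`
`Λ(A,B) = (ℓ_C γ / ℓ_A γ) · (ℓ_B γ / ℓ_C γ) ≤ Λ(A,C) · Λ(C,B)`,
and since all factors are positive, equality (which is `C ∈ Env(A,B)` after taking logarithms)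
holds exactly when `γ` realises both `Λ(A,C)` and `Λ(C,B)`. Applying this to every `γ ∈ S`
gives one inclusion, and to a single `γ ∈ S` the other.
-/

/-- The maximal stretching factor `Λ(A,B)`. -/
noncomputable def lamStretch {X Γ : Type*} (ℓ : X → Γ → ℝ) (A B : X) : ℝ :=
  sSup (Set.range fun γ => ℓ B γ / ℓ A γ)

/-- The asymmetric distance `d(A,B) = log Λ(A,B)`. -/
noncomputable def dLog {X Γ : Type*} (ℓ : X → Γ → ℝ) (A B : X) : ℝ :=
  Real.log (lamStretch ℓ A B)

/-- The set of witnesses from `A` to `B`. -/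
def witnesses {X Γ : Type*} (ℓ : X → Γ → ℝ) (A B : X) : Set Γ :=
  {γ | ℓ B γ / ℓ A γ = lamStretch ℓ A B}

/-- The envelope from `A` to `B`. -/
def env {X Γ : Type*} (ℓ : X → Γ → ℝ) (A B : X) : Set X :=
  {C | dLog ℓ A B = dLog ℓ A C + dLog ℓ C B}

/-- The out-envelope of `A` in the directions `S`. -/
def envOut {X Γ : Type*} (ℓ : X → Γ → ℝ) (A : X) (S : Set Γ) : Set X :=
  {C | S ⊆ witnesses ℓ A C}

/-- The in-envelope of `B` in the directions `S`. -/
def envIn {X Γ : Type*} (ℓ : X → Γ → ℝ) (B : X) (S : Set Γ) : Set X :=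
  {C | S ⊆ witnesses ℓ C B}

section

variable {X Γ : Type*} (ℓ : X → Γ → ℝ)

lemma lamStretch_pos (hpos : ∀ A γ, 0 < ℓ A γ) {A B : X} (hW : (witnesses ℓ A B).Nonempty) :
    0 < lamStretch ℓ A B := by
  obtain ⟨γ, hγ⟩ := hW
  rw [← hγ]
  exact div_pos (hpos B γ) (hpos A γ)

lemma div_le_lamStretch (hpos : ∀ A γ, 0 < ℓ A γ) {A B : X} (hW : (witnesses ℓ A B).Nonempty)
    (γ : Γ) : ℓ B γ / ℓ A γ ≤ lamStretch ℓ A B := by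
  have hbdd : BddAbove (Set.range fun γ => ℓ B γ / ℓ A γ) := by
    by_contra h
    have := lamStretch_pos ℓ hpos hW
    rw [lamStretch, Real.sSup_of_not_bddAbove h] at this
    exact this.false
  exact le_csSup hbdd ⟨γ, rfl⟩

lemma mem_env_iff_mul_lamStretch (hpos : ∀ A γ, 0 < ℓ A γ)
    (hatt : ∀ A B : X, ∃ γ : Γ, γ ∈ witnesses ℓ A B) {A B C : X} :
    C ∈ env ℓ A B ↔ lamStretch ℓ A C * lamStretch ℓ C B = lamStretch ℓ A B := by
  have hAC := lamStretch_pos ℓ hpos (hatt A C)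
  have hCB := lamStretch_pos ℓ hpos (hatt C B)
  rw [env, Set.mem_ofPred_eq, dLog, dLog, dLog, ← Real.log_mul hAC.ne' hCB.ne', eq_comm]
  exact Real.log_injOn_pos.eq_iff (mul_pos hAC hCB) (lamStretch_pos ℓ hpos (hatt A B))

lemma mem_env_iff_of_mem_witnesses (hpos : ∀ A γ, 0 < ℓ A γ)
    (hatt : ∀ A B : X, ∃ γ : Γ, γ ∈ witnesses ℓ A B) {A B C : X} {γ : Γ}
    (hγ : γ ∈ witnesses ℓ A B) :
    C ∈ env ℓ A B ↔ γ ∈ witnesses ℓ A C ∧ γ ∈ witnesses ℓ C B := by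
  have hsplit : ℓ C γ / ℓ A γ * (ℓ B γ / ℓ C γ) = lamStretch ℓ A B := by
    rw [← hγ]
    field_simp [(hpos C γ).ne']
  rw [mem_env_iff_mul_lamStretch ℓ hpos hatt, ← hsplit, eq_comm]
  exact mul_eq_mul_iff_eq_and_eq_of_pos (div_le_lamStretch ℓ hpos (hatt A C) γ)
    (div_le_lamStretch ℓ hpos (hatt C B) γ) (div_pos (hpos C γ) (hpos A γ))
    (lamStretch_pos ℓ hpos (hatt C B))

end

theorem stmt_17_general {X Γ : Type*} (ℓ : X → Γ → ℝ)
    (hpos : ∀ A γ, 0 < ℓ A γ)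
    (hatt : ∀ A B : X, ∃ γ : Γ, γ ∈ witnesses ℓ A B)
    (A B : X) (S : Set Γ) (hS : S.Nonempty) (hSW : S ⊆ witnesses ℓ A B) :
    env ℓ A B = envOut ℓ A S ∩ envIn ℓ B S := by
  ext C
  constructor
  · intro hC
    exact ⟨fun γ hγ => ((mem_env_iff_of_mem_witnesses ℓ hpos hatt (hSW hγ)).1 hC).1,
      fun γ hγ => ((mem_env_iff_of_mem_witnesses ℓ hpos hatt (hSW hγ)).1 hC).2⟩
  · rintro ⟨hout, hin⟩
    obtain ⟨γ, hγ⟩ := hS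
    exact (mem_env_iff_of_mem_witnesses ℓ hpos hatt (hSW hγ)).2 ⟨hout hγ, hin hγ⟩

/-- `Env(A,B) = Env^out(A,S) ∩ Env^in(B,S)` for every nonempty `S ⊆ W(A,B)`. -/
theorem stmt_17 {X Γ : Type*} [Nonempty Γ] (ℓ : X → Γ → ℝ)
    (hpos : ∀ A γ, 0 < ℓ A γ)
    (hatt : ∀ A B : X, ∃ γ : Γ, γ ∈ witnesses ℓ A B)
    (A B : X) (S : Set Γ) (hS : S.Nonempty) (hSW : S ⊆ witnesses ℓ A B) :
    env ℓ A B = envOut ℓ A S ∩ envIn ℓ B S :=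
  stmt_17_general ℓ hpos hatt A B S hS hSW
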